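/- arXiv:2206.14428 — 6 statements merged into one kernel-verified Lean document; each statement's English description precedes it below -/
import Mathlib

section
/- For every natural number n, the product P_n · P_nᵀ has entries (P_n P_nᵀ)_{ij} = choose(i+j, j) for 0 ≤ i,j ≤ n; that is, the symmetric Pascal matrix Q_n = P_n P_nᵀ is the matrix of binomial coefficients choose(i+j,j). -/
open Matrix

/-- The lower triangular Pascal matrix of size `n+1` over `ℤ`. -/
def pascalL (n : ℕ) : Matrix (Fin (n+1)) (Fin (n+1)) ℤ :=
  Matrix.of fun i j => (Nat.choose i.val j.val : ℤ)

lemma vandermonde_aux (N i j : ℕ) (hj : j < N) :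
    ∑ k ∈ Finset.range N, i.choose k * j.choose k = (i + j).choose j := by
  rw [Nat.add_choose_eq, Finset.Nat.sum_antidiagonal_eq_sum_range_succ_mk]
  rw [← Finset.sum_subset (Finset.range_subset_range.mpr hj)]
  · exact Finset.sum_congr rfl fun k hk => by
      rw [Nat.choose_symm (by simpa [Nat.lt_succ_iff] using hk)]
  · intro k _ hk
    have : j < k := by simpa [Nat.lt_succ_iff, not_le] using hk
    simp [Nat.choose_eq_zero_of_lt this]

theorem pascal_mul_transpose (n : ℕ) (i j : Fin (n+1)) :
    (pascalL n * (pascalL n)ᵀ) i j = (Nat.choose (i.val + j.val) j.val : ℤ) := by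
  rw [mul_apply]
  simp only [pascalL, transpose_apply, of_apply]
  simp only [← Nat.cast_mul, ← Nat.cast_sum]
  norm_cast
  rw [Fin.sum_univ_eq_sum_range (fun k => i.val.choose k * j.val.choose k)]
  exact vandermonde_aux (n+1) i.val j.val j.isLt
end

section
/- For every natural number n, the inverse of the symmetric Pascal matrix satisfies Q_n⁻¹ = D_n · (P_nᵀ · P_n) · D_n, where D_n is the diagonal matrix with entries (D_n)_{ii} = (−1)^i; in particular Q_n⁻¹ is similar to Q_n. -/
open Matrix

/-- The symmetric Pascal matrix `Q_n = P_n * P_nᵀ`. -/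
def pascalQ (n : ℕ) : Matrix (Fin (n+1)) (Fin (n+1)) ℤ :=
  pascalL n * (pascalL n)ᵀ

/-- The diagonal sign matrix with entries `(-1)^i`. -/
def pascalD (n : ℕ) : Matrix (Fin (n+1)) (Fin (n+1)) ℤ :=
  Matrix.diagonal fun i => (-1 : ℤ) ^ i.val

/-! Binomial inversion says `P⁻¹ = D P D`, i.e. `P D P = D`; transposing gives `Pᵀ D Pᵀ = D`.
Hence `Q (D PᵀP D) = P (Pᵀ D Pᵀ) P D = P D P D = D² = 1`, and conjugating `Q` by the involution
`S = P D` gives `S Q S = (P D P) PᵀP D = D PᵀP D`. -/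

open Finset

theorem sum_range_choose_mul_neg_one_pow_mul_choose (i j : ℕ) :
    ∑ k ∈ range (i + 1), (i.choose k : ℤ) * (-1) ^ k * k.choose j =
      if i = j then (-1) ^ j else 0 := by
  rcases lt_or_ge i j with hij | hji
  · rw [if_neg hij.ne]
    refine sum_eq_zero fun k hk => ?_
    rw [Nat.choose_eq_zero_of_lt (n := k) (by grind), Nat.cast_zero, mul_zero]
  · obtain ⟨d, rfl⟩ := Nat.exists_eq_add_of_le hji
    have hterm (m : ℕ) : ((j + d).choose (j + m) : ℤ) * (-1) ^ (j + m) * (j + m).choose j =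
        (-1) ^ j * (j + d).choose j * ((-1) ^ m * d.choose m) := by
      have h := Nat.choose_mul (n := j + d) (Nat.le_add_right j m)
      simp only [Nat.add_sub_cancel_left] at h
      have h' : ((j + d).choose (j + m) : ℤ) * (j + m).choose j = (j + d).choose j * d.choose m := by
        exact_mod_cast h
      rw [pow_add]
      linear_combination (-1 : ℤ) ^ j * (-1) ^ m * h'
    -- split the range at `j`: the terms below it vanish
    rw [add_assoc, sum_range_add, sum_eq_zero fun k hk => by
      rw [Nat.choose_eq_zero_of_lt (mem_range.1 hk), Nat.cast_zero, mul_zero]]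
    simp only [hterm, ← mul_sum, Int.alternating_sum_range_choose, zero_add]
    by_cases hd : d = 0 <;> simp [hd]

theorem pascalD_mul_self (n : ℕ) : pascalD n * pascalD n = 1 := by
  simp [pascalD, ← pow_add, ← two_mul, pow_mul]

theorem pascalD_transpose (n : ℕ) : (pascalD n)ᵀ = pascalD n :=
  diagonal_transpose _

theorem pascalL_mul_pascalD_mul_pascalL (n : ℕ) :
    pascalL n * pascalD n * pascalL n = pascalD n := by
  ext i j
  have hvanish : ∀ k ∈ range (n + 1), k ∉ range (i.val + 1) →
      (i.val.choose k : ℤ) * (-1) ^ k * k.choose j.val = 0 := fun k _ hk => by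
    rw [Nat.choose_eq_zero_of_lt (by simpa using hk), Nat.cast_zero, zero_mul, zero_mul]
  rw [mul_apply]
  simp only [pascalD, mul_diagonal, pascalL, of_apply, diagonal_apply]
  rw [Fin.sum_univ_eq_sum_range (fun k => (i.val.choose k : ℤ) * (-1) ^ k * k.choose j.val),
    ← sum_subset (range_subset_range.2 (by omega)) hvanish,
    sum_range_choose_mul_neg_one_pow_mul_choose]
  simp only [Fin.val_inj]
  split_ifs with h
  exacts [h ▸ rfl, rfl]

theorem pascalL_mul_pascalD_mul_self (n : ℕ) :
    pascalL n * pascalD n * (pascalL n * pascalD n) = 1 := by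
  rw [← Matrix.mul_assoc, pascalL_mul_pascalD_mul_pascalL, pascalD_mul_self]

theorem pascalQ_mul_pascalD_mul_transpose_mul_pascalD (n : ℕ) :
    pascalQ n * (pascalD n * ((pascalL n)ᵀ * pascalL n) * pascalD n) = 1 := by
  have hT : (pascalL n)ᵀ * pascalD n * (pascalL n)ᵀ = pascalD n := by
    simpa only [transpose_mul, pascalD_transpose, Matrix.mul_assoc] using
      congrArg transpose (pascalL_mul_pascalD_mul_pascalL n)
  calc pascalQ n * (pascalD n * ((pascalL n)ᵀ * pascalL n) * pascalD n)
      = pascalL n * ((pascalL n)ᵀ * pascalD n * (pascalL n)ᵀ) * (pascalL n * pascalD n) := by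
        simp only [pascalQ, Matrix.mul_assoc]
    _ = 1 := by rw [hT, ← Matrix.mul_assoc, pascalL_mul_pascalD_mul_pascalL, pascalD_mul_self]

theorem pascalQ_inv (n : ℕ) :
    (pascalQ n)⁻¹ = pascalD n * ((pascalL n)ᵀ * pascalL n) * pascalD n ∧
    ∃ S : Matrix (Fin (n+1)) (Fin (n+1)) ℤ,
      IsUnit S.det ∧ (pascalQ n)⁻¹ = S * pascalQ n * S⁻¹ := by
  have hQ := inv_eq_right_inv (pascalQ_mul_pascalD_mul_transpose_mul_pascalD n)
  have hS := pascalL_mul_pascalD_mul_self n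
  refine ⟨hQ, pascalL n * pascalD n, isUnit_det_of_right_inverse hS, ?_⟩
  rw [inv_eq_right_inv hS, hQ]
  calc pascalD n * ((pascalL n)ᵀ * pascalL n) * pascalD n
      = pascalL n * pascalD n * pascalL n * ((pascalL n)ᵀ * pascalL n) * pascalD n := by
        rw [pascalL_mul_pascalD_mul_pascalL]
    _ = pascalL n * pascalD n * pascalQ n * (pascalL n * pascalD n) := by
        simp only [pascalQ, Matrix.mul_assoc]
end

section
/- For every natural number n and every nonzero real number z, the characteristic polynomial of the symmetric Pascal matrix Q_n satisfies det(z·I − Q_n) = (−1)^{n+1} · z^{n+1} · det((1/z)·I − Q_n). Consequently the eigenvalues of Q_n come in reciprocal pairs: if q is an eigenvalue of Q_n then so is 1/q. -/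
/-!
Let `P` be the lower triangular Pascal matrix and `D = diag((-1)^i)`. Binomial inversion is the
identity `P D P = D`, so `S = P D` is an involution and `Q⁻¹ = (P Pᵀ)⁻¹ = D Pᵀ P D = S Q S`:
the inverse of `Q` is conjugate to `Q`. Since `det Q = (det P)² = 1`, the factorisation
`z I - Q = -z Q (z⁻¹ I - Q⁻¹)` turns this into the reciprocity of the characteristic polynomial,
and `σ(Q)⁻¹ = σ(Q⁻¹) = σ(Q)` for the spectrum.
-/

open Matrix Finset

/-- The symmetric Pascal matrix `Q_n`, with entries `choose (i+j) j`, viewed as a real matrix. -/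
def pascalQR (n : ℕ) : Matrix (Fin (n+1)) (Fin (n+1)) ℝ :=
  Matrix.of fun i j => (Nat.choose (i.val + j.val) j.val : ℝ)

theorem Nat.sum_range_choose_mul_choose {m i j : ℕ} (hj : j < m) :
    ∑ k ∈ range m, i.choose k * j.choose k = (i + j).choose j := by
  have hsymm : ∑ k ∈ range (j + 1), i.choose k * j.choose (j - k)
      = ∑ k ∈ range (j + 1), i.choose k * j.choose k :=
    sum_congr rfl fun k hk => by rw [choose_symm (mem_range_succ_iff.mp hk)]
  rw [add_choose_eq, Nat.sum_antidiagonal_eq_sum_range_succ_mk, hsymm]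
  refine (sum_subset (range_subset_range.2 hj) fun k _ hk => ?_).symm
  rw [choose_eq_zero_of_lt (n := j) (by simp at hk; omega), mul_zero]

theorem Int.alternating_sum_range_choose_mul_choose {m i j : ℕ} (hi : i < m) :
    ∑ k ∈ Finset.range m, ((-1) ^ k * i.choose k * k.choose j : ℤ) =
      if i = j then (-1) ^ i else 0 := by
  have hsupp : ∀ k ∈ Finset.range m, k ∉ Ico j (i + 1) →
      ((-1) ^ k * i.choose k * k.choose j : ℤ) = 0 := by
    intro k _ hk
    rcases lt_or_ge k j with hkj | hjk
    · simp [Nat.choose_eq_zero_of_lt hkj]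
    · simp [Nat.choose_eq_zero_of_lt (show i < k by simp at hk; omega)]
  rw [← sum_subset (fun k hk => by simp at hk ⊢; omega) hsupp]
  rcases lt_or_ge i j with hij | hji
  · simp [hij.ne, Ico_eq_empty_of_le (show i + 1 ≤ j by omega)]
  have hterm : ∀ t, ((-1) ^ (j + t) * i.choose (j + t) * (j + t).choose j : ℤ)
      = (-1) ^ j * i.choose j * ((-1) ^ t * (i - j).choose t) := by
    intro t
    have := Nat.choose_mul (n := i) (Nat.le_add_right j t)
    rw [Nat.add_sub_cancel_left] at this
    rw [mul_assoc, ← Nat.cast_mul, this, pow_add]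
    push_cast; ring
  rw [sum_Ico_eq_sum_range]
  simp_rw [hterm, ← mul_sum]
  rw [show i + 1 - j = i - j + 1 by omega, Int.alternating_sum_range_choose]
  rcases eq_or_ne i j with rfl | hij
  · simp
  · simp [hij, show i - j ≠ 0 by omega]

namespace Matrix

variable {n : Type*} [Fintype n] [DecidableEq n]

theorem inv_mul_transpose_eq_conj {R : Type*} [CommRing R] {P D : Matrix n n R}
    (hD : D * D = 1) (hDt : Dᵀ = D) (hPDP : P * D * P = D) :
    (P * Pᵀ)⁻¹ = P * D * (P * Pᵀ) * (P * D) := by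
  have hPDPt : Pᵀ * D * Pᵀ = D := by
    simpa [Matrix.mul_assoc, hDt] using congrArg transpose hPDP
  refine inv_eq_right_inv ?_
  calc P * Pᵀ * (P * D * (P * Pᵀ) * (P * D)) = P * (Pᵀ * (P * D * P) * Pᵀ) * (P * D) := by
        simp only [Matrix.mul_assoc]
    _ = D * D := by rw [hPDP, ← Matrix.mul_assoc, hPDPt, hPDP]
    _ = 1 := hD

theorem det_smul_one_sub_eq_mul_det_inv_smul_one_sub_inv {K : Type*} [Field K] {A : Matrix n n K}
    (hA : IsUnit A.det) {z : K} (hz : z ≠ 0) :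
    det (z • 1 - A) = (-z) ^ Fintype.card n * A.det * det (z⁻¹ • 1 - A⁻¹) := by
  have hfactor : z • 1 - A = -z • (A * (z⁻¹ • 1 - A⁻¹)) := by
    rw [Matrix.mul_sub, mul_nonsing_inv A hA, Matrix.mul_smul, Matrix.mul_one, smul_sub,
      smul_smul, neg_mul, mul_inv_cancel₀ hz, neg_smul, one_smul, neg_smul, neg_sub_neg]
  rw [hfactor, det_smul, det_mul, mul_assoc]

theorem det_smul_one_sub_units_conj {R : Type*} [CommRing R] (U : (Matrix n n R)ˣ)
    (A : Matrix n n R) (z : R) :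
    det (z • (1 : Matrix n n R) - (U : Matrix n n R) * A * (↑U⁻¹ : Matrix n n R)) =
      det (z • 1 - A) := by
  have := congrArg (Polynomial.eval z) (charpoly_units_conj U A)
  simpa only [eval_charpoly, scalar_apply, smul_one_eq_diagonal, coe_units_inv] using this

end Matrix

theorem spectrum.inv_mem_of_inv_eq_units_conj {𝕜 A : Type*} [Field 𝕜] [Ring A] [Algebra 𝕜 A]
    {a u : Aˣ} (h : (↑a⁻¹ : A) = u * a * ↑u⁻¹) {q : 𝕜} (hq : q ∈ spectrum 𝕜 (a : A)) :
    q⁻¹ ∈ spectrum 𝕜 (a : A) := by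
  rw [← spectrum.units_conjugate (u := u), ← h, ← spectrum.map_inv]
  exact Set.inv_mem_inv.mpr hq

section Pascal

variable (R : Type*) [CommRing R] (m : ℕ)

def pascalLower : Matrix (Fin m) (Fin m) R :=
  of fun i j => ((i : ℕ).choose j : R)

def altSigns : Matrix (Fin m) (Fin m) R :=
  diagonal fun i => (-1) ^ (i : ℕ)

variable {R m}

theorem altSigns_mul_self : altSigns R m * altSigns R m = 1 := by
  simp [altSigns, ← pow_add, ← two_mul, pow_mul]

theorem transpose_altSigns : (altSigns R m)ᵀ = altSigns R m :=
  diagonal_transpose _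

theorem det_pascalLower : (pascalLower R m).det = 1 := by
  rw [det_of_isLowerTriangular _ fun i j hij => by
    simp [pascalLower, Nat.choose_eq_zero_of_lt (show (i : ℕ) < j from hij)]]
  simp [pascalLower]

theorem pascalLower_mul_altSigns_mul_pascalLower :
    pascalLower R m * altSigns R m * pascalLower R m = altSigns R m := by
  ext i j
  have hsum := congrArg (Int.cast : ℤ → R) (Int.alternating_sum_range_choose_mul_choose
    (m := m) (j := j) i.isLt)
  push_cast at hsum
  rw [mul_apply]
  simp only [altSigns, pascalLower, mul_diagonal, of_apply, diagonal_apply, Fin.ext_iff]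
  rw [Fin.sum_univ_eq_sum_range (fun k => ((i : ℕ).choose k : R) * (-1) ^ k * (k.choose j : R)),
    ← hsum]
  exact sum_congr rfl fun k _ => by ring

theorem pascalLower_mul_altSigns_mul_self :
    pascalLower R m * altSigns R m * (pascalLower R m * altSigns R m) = 1 := by
  rw [← Matrix.mul_assoc, pascalLower_mul_altSigns_mul_pascalLower, altSigns_mul_self]

end Pascal

theorem pascalLower_mul_transpose (n : ℕ) :
    pascalLower ℝ (n + 1) * (pascalLower ℝ (n + 1))ᵀ = pascalQR n := by
  ext i j
  simp only [pascalLower, pascalQR, mul_apply, transpose_apply, of_apply]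
  rw [Fin.sum_univ_eq_sum_range (fun k => ((i : ℕ).choose k : ℝ) * ((j : ℕ).choose k : ℝ))]
  exact_mod_cast Nat.sum_range_choose_mul_choose j.isLt

theorem det_pascalQR (n : ℕ) : (pascalQR n).det = 1 := by
  rw [← pascalLower_mul_transpose, det_mul, det_transpose, det_pascalLower, mul_one]

theorem pascalQR_inv_eq_conj (n : ℕ) :
    (pascalQR n)⁻¹ = pascalLower ℝ (n + 1) * altSigns ℝ (n + 1) * pascalQR n *
      (pascalLower ℝ (n + 1) * altSigns ℝ (n + 1)) := by
  rw [← pascalLower_mul_transpose]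
  exact inv_mul_transpose_eq_conj altSigns_mul_self transpose_altSigns
    pascalLower_mul_altSigns_mul_pascalLower

theorem pascalQR_reciprocal_eigenvalues (n : ℕ) :
    (∀ z : ℝ, z ≠ 0 →
      (z • (1 : Matrix (Fin (n+1)) (Fin (n+1)) ℝ) - pascalQR n).det
        = (-1 : ℝ) ^ (n+1) * z ^ (n+1) *
          ((1/z) • (1 : Matrix (Fin (n+1)) (Fin (n+1)) ℝ) - pascalQR n).det) ∧
    (∀ q : ℝ, q ∈ spectrum ℝ (pascalQR n) → 1/q ∈ spectrum ℝ (pascalQR n)) := by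
  let s : (Matrix (Fin (n + 1)) (Fin (n + 1)) ℝ)ˣ :=
    ⟨_, _, pascalLower_mul_altSigns_mul_self, pascalLower_mul_altSigns_mul_self⟩
  have hconj : (pascalQR n)⁻¹ = s.val * pascalQR n * s⁻¹.val := pascalQR_inv_eq_conj n
  have hdet : IsUnit (pascalQR n).det := by rw [det_pascalQR]; exact isUnit_one
  refine ⟨fun z hz => ?_, fun q hq => ?_⟩
  · rw [det_smul_one_sub_eq_mul_det_inv_smul_one_sub_inv hdet hz, hconj,
      det_smul_one_sub_units_conj, det_pascalQR, Fintype.card_fin, neg_pow, mul_one, one_div]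
  · have hQ := (isUnit_iff_isUnit_det _).mpr hdet
    rw [one_div]
    refine spectrum.inv_mem_of_inv_eq_units_conj (a := hQ.unit) (u := s) ?_ hq
    rwa [coe_units_inv, IsUnit.unit_spec]
end

section
/- Let R be a commutative ring, n ≥ 1 a natural number, and x, y ∈ R. Then det T_n(x,y) = x + y. -/
open Matrix

/-- The matrix `T_n(x,y)` of size `2n+1`: the tridiagonal path matrix with `1`s on the
off-diagonals, `y` in the upper-right corner and `x` in the lower-left corner. -/
def Tmat (R : Type*) [CommRing R] (n : ℕ) (x y : R) :
    Matrix (Fin (2*n+1)) (Fin (2*n+1)) R :=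
  Matrix.of fun i j =>
    if i.val + 1 = j.val ∨ j.val + 1 = i.val then 1
    else if i.val = 0 ∧ j.val = 2*n then y
    else if i.val = 2*n ∧ j.val = 0 then x
    else 0

/-!
In the Leibniz expansion of the determinant, a permutation `σ` contributes only if every
`σ i` is a cyclic neighbour `i ± 1` of `i`. The displacements `σ i - i` sum to `0` in
`ℤ/(2n+1)`, so the number `k` of forward steps satisfies `2k ≡ 0`; as `2n+1` is odd, `σ` is
the rotation or its inverse. Both are `(2n+1)`-cycles, hence even, and contribute `y` and `x`.
-/

open Finset

section CyclicBand

variable {m : ℕ}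

lemma sign_finRotate_of_odd (hm : Odd m) : Equiv.Perm.sign (finRotate m) = 1 := by
  obtain ⟨k, rfl⟩ := hm
  rw [sign_finRotate, Nat.add_sub_cancel]
  exact (even_two_mul k).neg_one_pow

lemma finRotate_inv_apply [NeZero m] (i : Fin m) : (finRotate m)⁻¹ i = i - 1 :=
  finRotate_symm_apply i

lemma finRotate_ne_inv (hm : 3 ≤ m) : finRotate m ≠ (finRotate m)⁻¹ := by
  have : NeZero m := ⟨by omega⟩
  intro h
  have h0 := congrArg (· 0) h
  simp only [finRotate_apply, finRotate_inv_apply, zero_add, zero_sub, Fin.ext_iff,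
    Fin.val_neg, Fin.val_one', Nat.one_mod_eq_one.2 (by omega : m ≠ 1)] at h0
  split_ifs at h0
  omega

variable [NeZero m]

open Fin.CommRing in
theorem Equiv.Perm.eq_finRotate_or_inv_of_apply_adjacent (hm : Odd m)
    (σ : Equiv.Perm (Fin m)) (hσ : ∀ i, σ i = i + 1 ∨ σ i = i - 1) :
    σ = finRotate m ∨ σ = (finRotate m)⁻¹ := by
  set S := univ.filter fun i => σ i = i + 1
  set B := univ.filter fun i => ¬ σ i = i + 1
  have hstep : ∀ i, σ i - i = if σ i = i + 1 then 1 else -1 := by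
    intro i
    split_ifs with h
    · rw [h, add_sub_cancel_left]
    · rw [(hσ i).resolve_left h, sub_sub_cancel_left]
  have hcard : #S + #B = m := by
    rw [card_filter_add_card_filter_not, card_univ, Fintype.card_fin]
  have hdisp : (#S : Fin m) - #B = 0 := by
    calc _ = ∑ i, (σ i - i) := by
          simp_rw [hstep]
          rw [sum_ite, sum_const, sum_const, nsmul_eq_mul, nsmul_eq_mul]
          ring
      _ = 0 := by rw [sum_sub_distrib, Equiv.sum_comp σ (fun i => i), sub_self]
  have hcount : ((2 * #S : ℕ) : Fin m) = 0 := by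
    have hsum := congrArg (Nat.cast : ℕ → Fin m) hcard
    push_cast at hsum ⊢
    linear_combination hdisp + hsum + Fin.natCast_self m
  have hdvd : m ∣ #S :=
    (Nat.coprime_two_right.2 hm).dvd_of_dvd_mul_left (Fin.natCast_eq_zero.1 hcount)
  rcases Nat.eq_zero_or_pos #S with h0 | hpos
  · right
    refine Equiv.ext fun i => ?_
    have hi : i ∉ S := by simp [card_eq_zero.1 h0]
    rw [finRotate_inv_apply]
    exact (hσ i).resolve_left (by simpa [S] using hi)
  · left
    have hS : S = univ := by
      refine eq_univ_of_card S (le_antisymm (card_le_univ S) ?_)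
      simpa using Nat.le_of_dvd hpos hdvd
    refine Equiv.ext fun i => ?_
    have hi : i ∈ S := hS ▸ mem_univ i
    rw [finRotate_apply]
    simpa [S] using hi

theorem Matrix.det_eq_prod_add_prod_of_cyclic_band {R : Type*} [CommRing R] (hm : Odd m)
    (hm3 : 3 ≤ m) (M : Matrix (Fin m) (Fin m) R)
    (hM : ∀ i j, i ≠ j + 1 → i ≠ j - 1 → M i j = 0) :
    M.det = ∏ i, M (i + 1) i + ∏ i, M i (i + 1) := by
  rw [det_apply, Fintype.sum_eq_add _ _ (finRotate_ne_inv hm3), map_inv,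
    sign_finRotate_of_odd hm, inv_one, one_smul, one_smul]
  · congr 1
    · simp only [finRotate_apply]
    · rw [← Equiv.prod_comp (finRotate m)]
      simp_rw [Equiv.Perm.inv_def, Equiv.symm_apply_apply, finRotate_apply]
  · rintro σ ⟨hσ₁, hσ₂⟩
    obtain ⟨i, hi₁, hi₂⟩ : ∃ i, σ i ≠ i + 1 ∧ σ i ≠ i - 1 := by
      by_contra! h
      have hadj i : σ i = i + 1 ∨ σ i = i - 1 := or_iff_not_imp_left.2 (h i)
      rcases σ.eq_finRotate_or_inv_of_apply_adjacent hm hadj with h | h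
      exacts [hσ₁ h, hσ₂ h]
    rw [prod_eq_zero (f := fun j => M (σ j) j) (mem_univ i) (hM _ _ hi₁ hi₂), smul_zero]

end CyclicBand

section Tmat

variable (R : Type*) [CommRing R] {n : ℕ} (x y : R)

lemma Tmat_succ_castSucc (i : Fin (2 * n)) : Tmat R n x y i.succ i.castSucc = 1 := by
  simp [Tmat]

lemma Tmat_castSucc_succ (i : Fin (2 * n)) : Tmat R n x y i.castSucc i.succ = 1 := by
  simp [Tmat]

lemma Tmat_zero_last : Tmat R n x y 0 (Fin.last _) = y := by
  simp [Tmat, show 1 ≠ 2 * n by omega]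

lemma Tmat_last_zero (hn : 1 ≤ n) : Tmat R n x y (Fin.last _) 0 = x := by
  simp [Tmat, show 1 ≠ 2 * n by omega, show n ≠ 0 by omega]

lemma Tmat_eq_zero (i j : Fin (2 * n + 1)) (h₁ : i ≠ j + 1) (h₂ : i ≠ j - 1) :
    Tmat R n x y i j = 0 := by
  simp only [ne_eq, Fin.ext_iff, Fin.val_add_one, Fin.coe_sub_one, Fin.val_last,
    Fin.val_zero] at h₁ h₂
  have := i.is_lt
  have := j.is_lt
  simp only [Tmat, of_apply]
  split_ifs at h₁ h₂ ⊢ <;> first | rfl | omega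

lemma prod_Tmat_add_one_self : ∏ i, Tmat R n x y (i + 1) i = y := by
  rw [Fin.prod_univ_castSucc]
  simp [Fin.coeSucc_eq_succ, Tmat_succ_castSucc, Tmat_zero_last]

lemma prod_Tmat_self_add_one (hn : 1 ≤ n) : ∏ i, Tmat R n x y i (i + 1) = x := by
  rw [Fin.prod_univ_castSucc]
  simp [Fin.coeSucc_eq_succ, Tmat_castSucc_succ, Tmat_last_zero R x y hn]

end Tmat

theorem det_Tmat (R : Type*) [CommRing R] (n : ℕ) (hn : 1 ≤ n) (x y : R) :
    (Tmat R n x y).det = x + y := by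
  rw [det_eq_prod_add_prod_of_cyclic_band (odd_two_mul_add_one n) (by omega) _
    (Tmat_eq_zero R x y), prod_Tmat_add_one_self, prod_Tmat_self_add_one R x y hn, add_comm]
end

section
/- Let F be a field, n ≥ 1, and x_0,…,x_n, y_0,…,y_n ∈ F with x_n + y_n ≠ 0. Then det H_n(x,y) equals the determinant of the bordered matrix of size n²+1 given in block form by [[x_n + y_n, (−1)^n x_n Uᵀ], [y_n U, H_{n−1}(x,y)]], where H_{n−1}(x,y) is the Hückel matrix of the triangle with rows 0,…,n−1 and parameters x_0,…,x_{n−1}, y_0,…,y_{n−1}, and U is the column vector of length n² indexed by the vertices (m,j) (0 ≤ m ≤ n−1, 0 ≤ j ≤ 2m) with U[(m,j)] = 0 for m < n−1, U[(n−1,j)] = (−1)^{j/2} for even j, and U[(n−1,j)] = 0 for odd j. -/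
/-!
Split the top row `N = n + 1` of the triangle into the path formed by its first `2N` atoms and
its last atom `(N, 2N)`. The adjacency matrix of a path on `2N` vertices has determinant `(-1)^N`
and an explicit inverse, with entries `±1` between an even vertex and a later odd one (and
symmetrically), so one can take the Schur complement of the path. The atom `(N, 2β+1)` is the only
neighbour of `(n, 2β)` in the top row and the inverse vanishes between odd vertices, so the block
of rows `0, …, n` of the complement is still `H_n`; the last atom meets the path only at `2N-1`
and, through the corner, at `0`, and the entries of the inverse between these two vertices and the
odd vertices produce the border `U` and the corner `(-1)^n (x_N + y_N)`. Rescaling the border row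
and column by signs gives the bordered matrix.
-/

open Matrix

/-- Vertices of the graphene triangle with rows `0, …, n`: row `m` has `2m+1` atoms. -/
abbrev TriIdx (n : ℕ) := (m : Fin (n+1)) × Fin (2*m.val+1)

/-- The Hückel matrix of the graphene triangle, with row-dependent boundary parameters
`x m`, `y m`. -/
def Huckel (F : Type*) [Field F] (n : ℕ) (x y : Fin (n+1) → F) :
    Matrix (TriIdx n) (TriIdx n) F :=
  Matrix.of fun p q =>
    if p.1 = q.1 ∧ (p.2.val + 1 = q.2.val ∨ q.2.val + 1 = p.2.val) then 1
    else if p.1.val + 1 = q.1.val ∧ Even p.2.val ∧ q.2.val = p.2.val + 1 then 1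
    else if q.1.val + 1 = p.1.val ∧ Even q.2.val ∧ p.2.val = q.2.val + 1 then 1
    else if 1 ≤ p.1.val ∧ p.1 = q.1 ∧ p.2.val = 0 ∧ q.2.val = 2*p.1.val then y p.1
    else if 1 ≤ p.1.val ∧ p.1 = q.1 ∧ p.2.val = 2*p.1.val ∧ q.2.val = 0 then x p.1
    else if p.1.val = 0 ∧ q.1.val = 0 then x p.1 + y p.1
    else 0

/-- The bordering vector `U`: it vanishes on all rows except the top row (row `n`),
where it has alternating components `1, 0, -1, 0, 1, …`. -/
def borderU (F : Type*) [Field F] (n : ℕ) : TriIdx n → F :=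
  fun p => if p.1.val = n ∧ Even p.2.val then (-1 : F) ^ (p.2.val / 2) else 0

section Path

variable {R : Type*} [CommRing R]

def pathAdj (R : Type*) [CommRing R] (m : ℕ) : Matrix (Fin m) (Fin m) R :=
  of fun i j => if i.val + 1 = j.val ∨ j.val + 1 = i.val then 1 else 0

lemma det_pathAdj_add_two (m : ℕ) : (pathAdj R (m + 2)).det = -(pathAdj R m).det := by
  have hcore : ((pathAdj R (m + 2)).submatrix Fin.succ (Fin.succAbove 1)).submatrix
      (Fin.succAbove 0) Fin.succ = pathAdj R m := by
    ext i j
    simp [pathAdj, Fin.succAbove]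
  have hminor : ((pathAdj R (m + 2)).submatrix Fin.succ (Fin.succAbove 1)).det
      = (pathAdj R m).det := by
    rw [det_succ_column_zero, Fin.sum_univ_succ, hcore]
    simp [pathAdj, Fin.succAbove]
  rw [det_succ_row_zero, Fin.sum_univ_succ, Fin.sum_univ_succ, Fin.succ_zero_eq_one, hminor]
  simp [pathAdj]

lemma det_pathAdj_two_mul (N : ℕ) : (pathAdj R (2 * N)).det = (-1) ^ N := by
  induction N with
  | zero => simp
  | succ N ih => rw [mul_add_one, det_pathAdj_add_two, ih, pow_succ, mul_neg_one]

lemma sum_pathAdj_mul {m : ℕ} (f : ℕ → R) (j : Fin m) :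
    ∑ l : Fin m, pathAdj R m j l * f l
      = (if j.val + 1 < m then f (j + 1) else 0) + (if j.val = 0 then 0 else f (j - 1)) := by
  have hsplit : ∀ l : ℕ, (if j.val + 1 = l ∨ l + 1 = j.val then (1 : R) else 0) * f l
      = (if l = j.val + 1 then f l else 0) + (if l = j.val - 1 ∧ j.val ≠ 0 then f l else 0) := by
    intro l
    split_ifs <;> first | omega | simp
  simp only [pathAdj, of_apply]
  rw [Fin.sum_univ_eq_sum_range
    (fun l => (if j.val + 1 = l ∨ l + 1 = j.val then (1 : R) else 0) * f l)]
  simp only [hsplit, Finset.sum_add_distrib, ite_and, Finset.sum_ite_eq', Finset.mem_range]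
  split_ifs <;> first | omega | simp

def pathInvEntry (R : Type*) [CommRing R] (j k : ℕ) : R :=
  if (Even j ∧ Odd k ∧ j < k) ∨ (Odd j ∧ Even k ∧ k < j) then (-1) ^ (j / 2 + k / 2) else 0

lemma pathInvEntry_self (j : ℕ) : pathInvEntry R j j = 0 := by
  simp [pathInvEntry]

lemma pathInvEntry_one (k : ℕ) : pathInvEntry R 1 k = if k = 0 then 1 else 0 := by
  rcases k with _ | k <;> simp [pathInvEntry]

lemma pathInvEntry_add_two (i k : ℕ) :
    pathInvEntry R i k + pathInvEntry R (i + 2) k = if i + 1 = k then 1 else 0 := by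
  simp only [pathInvEntry, Nat.even_iff, Nat.odd_iff, Nat.add_div_right _ two_pos]
  split_ifs <;> first | omega | ring1 | simp only [add_zero, zero_add]
  all_goals exact Even.neg_one_pow (by rw [Nat.even_iff]; omega)

lemma pathInvEntry_of_even_of_lt {j k : ℕ} (hj : Even j) (hk : k < j) :
    pathInvEntry R j k = 0 := by
  simp [pathInvEntry, hj, Nat.not_lt.mpr hk.le, Nat.not_odd_iff_even.mpr hj]

lemma pathInvEntry_of_odd_of_odd {j k : ℕ} (hj : Odd j) (hk : Odd k) :
    pathInvEntry R j k = 0 := by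
  simp [pathInvEntry, Nat.not_even_iff_odd.mpr hj, Nat.not_even_iff_odd.mpr hk]

lemma pathInvEntry_zero_left {k : ℕ} (hk : Odd k) : pathInvEntry R 0 k = (-1) ^ (k / 2) := by
  simp [pathInvEntry, hk, hk.pos]

lemma pathInvEntry_zero_right {j : ℕ} (hj : Odd j) : pathInvEntry R j 0 = (-1) ^ (j / 2) := by
  simp [pathInvEntry, hj, hj.pos]

def pathInv (R : Type*) [CommRing R] (N : ℕ) : Matrix (Fin (2 * N)) (Fin (2 * N)) R :=
  of fun j k => pathInvEntry R j k

lemma pathAdj_mul_pathInv (N : ℕ) : pathAdj R (2 * N) * pathInv R N = 1 := by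
  ext j k
  rw [mul_apply, one_apply]
  simp only [pathInv, of_apply, Fin.ext_iff]
  rw [sum_pathAdj_mul (fun l => pathInvEntry R l k)]
  have hlast : pathInvEntry R (j + 1) k
      = if j.val + 1 < 2 * N then pathInvEntry R (j + 1) k else 0 := by
    split_ifs with h
    · rfl
    · exact pathInvEntry_of_even_of_lt ⟨N, by omega⟩ (by omega)
  rw [← hlast]
  obtain ⟨_ | i, hj⟩ := j
  · simp [pathInvEntry_one, eq_comm]
  · rw [if_neg i.succ_ne_zero, Nat.add_one_sub_one, add_comm]
    exact pathInvEntry_add_two i k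

end Path

lemma Fin.sum_ite_val_eq {M : Type*} [AddCommMonoid M] {m : ℕ} (i : ℕ) (f : Fin m → M) :
    ∑ j : Fin m, (if j.val = i then f j else 0) = if h : i < m then f ⟨i, h⟩ else 0 := by
  split_ifs with h
  · rw [Finset.sum_eq_single ⟨i, h⟩] <;> simp +contextual [Fin.ext_iff]
  · exact Finset.sum_eq_zero fun j _ => by simp [show j.val ≠ i by omega]

lemma Matrix.det_fromBlocks_smul {m n R : Type*} [Fintype m] [DecidableEq m] [Fintype n]
    [DecidableEq n] [CommRing R] (s t : R) (A : Matrix m m R) (B : Matrix m n R)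
    (C : Matrix n m R) (D : Matrix n n R) :
    (fromBlocks ((s * t) • A) (s • B) (t • C) D).det
      = (s * t) ^ Fintype.card m * (fromBlocks A B C D).det := by
  have hfactor : fromBlocks ((s * t) • A) (s • B) (t • C) D
      = fromBlocks (s • 1) 0 0 1 * fromBlocks A B C D * fromBlocks (t • 1) 0 0 1 := by
    simp [fromBlocks_multiply, smul_smul, mul_comm]
  rw [hfactor, det_mul, det_mul, det_fromBlocks_zero₂₁, det_fromBlocks_zero₂₁, det_smul, det_smul,
    det_one, det_one, mul_pow]
  ring

lemma det_fromBlocks_sub_border {ι R : Type*} [Fintype ι] [DecidableEq ι] [CommRing R] (n : ℕ)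
    (a b : R) (u : ι → R) (D : Matrix ι ι R) :
    (fromBlocks 0 0 0 D - fromBlocks (of fun (_ : Unit) _ => (-1) ^ n * (a + b))
        (of fun _ q => a * u q) (of fun p _ => b * u p) 0).det
      = (-1) ^ (n + 1) * (fromBlocks (of fun (_ : Unit) _ => a + b)
          (of fun _ q => (-1) ^ (n + 1) * a * u q) (of fun p _ => b * u p) D).det := by
  have hsign : (-1 : R) ^ n * (-1) ^ (n + 1) = -1 := by
    rw [← pow_add]
    exact Odd.neg_one_pow ⟨n, by ring⟩
  have hscaled : fromBlocks (0 : Matrix Unit Unit R) 0 0 D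
        - fromBlocks (of fun (_ : Unit) _ => (-1) ^ n * (a + b))
          (of fun _ q => a * u q) (of fun p _ => b * u p) 0
      = fromBlocks (((-1 : R) ^ n * -1) • of fun (_ : Unit) _ => a + b)
          ((-1 : R) ^ n • of fun _ q => (-1) ^ (n + 1) * a * u q)
          ((-1 : R) • of fun p _ => b * u p) D := by
    ext (_ | p) (_ | q) <;> simp [← mul_assoc, hsign]
  rw [hscaled, det_fromBlocks_smul, Fintype.card_unit, pow_one, ← pow_succ]

section TopRow

lemma TriIdx.ext_val {n : ℕ} {p q : TriIdx n} (h₁ : p.1.val = q.1.val) (h₂ : p.2.val = q.2.val) :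
    p = q := by
  obtain ⟨⟨m, hm⟩, j⟩ := p
  obtain ⟨⟨m', hm'⟩, j'⟩ := q
  obtain rfl : m = m' := h₁
  obtain rfl : j = j' := Fin.ext h₂
  rfl

def topRowSplit (n : ℕ) : Fin (2 * (n + 1)) ⊕ (Unit ⊕ TriIdx n) → TriIdx (n + 1)
  | .inl j => ⟨Fin.last (n + 1), j.castSucc⟩
  | .inr (.inl _) => ⟨Fin.last (n + 1), Fin.last _⟩
  | .inr (.inr p) => ⟨p.1.castSucc, p.2⟩

lemma topRowSplit_bijective (n : ℕ) : Function.Bijective (topRowSplit n) := by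
  constructor
  · rintro (j | _ | p) (k | _ | q) h <;>
      have h₁ := congrArg (fun r : TriIdx (n + 1) => r.1.val) h <;>
      have h₂ := congrArg (fun r : TriIdx (n + 1) => r.2.val) h <;>
      simp only [topRowSplit, Fin.val_last, Fin.val_castSucc] at h₁ h₂
    all_goals first
      | omega
      | rfl
      | exact congrArg Sum.inl (Fin.ext h₂)
      | exact congrArg (Sum.inr ∘ Sum.inr) (TriIdx.ext_val h₁ h₂)
  · rintro ⟨m, j⟩
    by_cases hm : m.val = n + 1
    · obtain rfl : m = Fin.last (n + 1) := Fin.ext hm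
      by_cases hj : j.val = 2 * (n + 1)
      · exact ⟨.inr (.inl ()), TriIdx.ext_val rfl hj.symm⟩
      · exact ⟨.inl ⟨j.val, by omega⟩, TriIdx.ext_val rfl rfl⟩
    · exact ⟨.inr (.inr ⟨⟨m.val, by omega⟩, j⟩), TriIdx.ext_val rfl rfl⟩

noncomputable def topRowEquiv (n : ℕ) : Fin (2 * (n + 1)) ⊕ (Unit ⊕ TriIdx n) ≃ TriIdx (n + 1) :=
  Equiv.ofBijective _ (topRowSplit_bijective n)

variable {F : Type*} [Field F]

/-- Row `j` lists the neighbours of the `j`-th atom of the top row outside the path formed by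
its first `2(n+1)` atoms: the last atom of the top row (through the corner edge, of weight `c`,
when `j = 0`) and the atoms `(n, j - 1)` of row `n` for odd `j`. -/
def topLink (F : Type*) [Field F] (n : ℕ) (c : F) :
    Matrix (Fin (2 * (n + 1))) (Unit ⊕ TriIdx n) F :=
  of fun j => Sum.elim
    (fun _ => (if j.val = 2 * n + 1 then 1 else 0) + if j.val = 0 then c else 0)
    (fun q => if q.1.val = n ∧ Even q.2.val ∧ j.val = q.2.val + 1 then 1 else 0)

lemma huckel_submatrix_topRowEquiv (n : ℕ) (x y : Fin (n + 2) → F) :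
    (Huckel F (n + 1) x y).submatrix (topRowEquiv n) (topRowEquiv n)
      = fromBlocks (pathAdj F (2 * (n + 1))) (topLink F n (y (Fin.last (n + 1))))
          (topLink F n (x (Fin.last (n + 1))))ᵀ
          (fromBlocks 0 0 0 (Huckel F n (fun m => x m.castSucc) (fun m => y m.castSucc))) := by
  ext (j | _ | p) (k | _ | q) <;>
    simp only [topRowEquiv, Equiv.ofBijective_apply, topRowSplit, submatrix_apply,
      fromBlocks_apply₁₁, fromBlocks_apply₁₂, fromBlocks_apply₂₁, fromBlocks_apply₂₂,
      transpose_apply, Matrix.zero_apply, Huckel, pathAdj, topLink, of_apply, Sum.elim_inl,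
      Sum.elim_inr, Fin.val_last, Fin.val_castSucc, Fin.castSucc_inj, Nat.even_iff,
      Fin.castSucc_ne_last, (Fin.castSucc_ne_last _).symm, true_and, and_true, false_and,
      and_false] <;>
    split_ifs <;> first | omega | simp_all

lemma sum_topLink_mul {n : ℕ} (c : F) (f : ℕ → F) (u : Unit ⊕ TriIdx n) :
    ∑ j : Fin (2 * (n + 1)), topLink F n c j u * f j
      = Sum.elim (fun _ => f (2 * n + 1) + c * f 0)
          (fun q => if q.1.val = n ∧ Even q.2.val then f (q.2.val + 1) else 0) u := by
  rcases u with _ | q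
  · have hlt : 2 * n + 1 < 2 * (n + 1) := by omega
    simp [topLink, add_mul, ite_mul, Finset.sum_add_distrib, Fin.sum_ite_val_eq, hlt]
  · by_cases hq : q.1.val = n ∧ Even q.2.val
    · have hlt : q.2.val + 1 < 2 * (n + 1) := by have := q.2.isLt; omega
      simp [topLink, hq, ite_mul, Fin.sum_ite_val_eq, hlt]
    · simp [topLink, ← and_assoc, hq]

lemma topLink_transpose_mul_pathInv_mul_topLink (n : ℕ) (a b : F) :
    (topLink F n a)ᵀ * pathInv F (n + 1) * topLink F n b
      = fromBlocks (of fun _ _ => (-1) ^ n * (a + b)) (of fun _ q => a * borderU F n q)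
          (of fun p _ => b * borderU F n p) 0 := by
  ext u v
  set g : ℕ → F := fun k => Sum.elim
    (fun _ => pathInvEntry F (2 * n + 1) k + a * pathInvEntry F 0 k)
    (fun p => if p.1.val = n ∧ Even p.2.val then pathInvEntry F (p.2.val + 1) k else 0) u with hg
  have hinner : ∀ k : ℕ, ∑ j : Fin (2 * (n + 1)), topLink F n a j u * pathInvEntry F j k = g k :=
    fun k => sum_topLink_mul a (fun j => pathInvEntry F j k) u
  simp only [mul_apply, transpose_apply, pathInv, of_apply, hinner]
  simp only [mul_comm (g _)]
  rw [sum_topLink_mul b g v]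
  have hodd : Odd (2 * n + 1) := odd_two_mul_add_one n
  have hhalf : (2 * n + 1) / 2 = n := by omega
  have hsucc {r : ℕ} (hr : Even r) : Odd (r + 1) ∧ (r + 1) / 2 = r / 2 := by
    obtain ⟨s, rfl⟩ := hr
    exact ⟨Even.add_one ⟨s, rfl⟩, by omega⟩
  rcases u with _ | p <;> rcases v with _ | q <;>
    simp only [hg, Sum.elim_inl, Sum.elim_inr, fromBlocks_apply₁₁, fromBlocks_apply₁₂,
      fromBlocks_apply₂₁, fromBlocks_apply₂₂, of_apply, Matrix.zero_apply, borderU]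
  · rw [pathInvEntry_of_odd_of_odd hodd hodd, pathInvEntry_zero_left hodd,
      pathInvEntry_zero_right hodd, pathInvEntry_self, hhalf]
    ring
  · split_ifs with hq
    · rw [pathInvEntry_of_odd_of_odd hodd (hsucc hq.2).1, pathInvEntry_zero_left (hsucc hq.2).1,
        (hsucc hq.2).2, zero_add]
    · simp
  · split_ifs with hp
    · rw [pathInvEntry_of_odd_of_odd (hsucc hp.2).1 hodd, pathInvEntry_zero_right (hsucc hp.2).1,
        (hsucc hp.2).2, zero_add, mul_comm]
    · simp
  · split_ifs with hq hp
    · exact pathInvEntry_of_odd_of_odd (hsucc hp.2).1 (hsucc hq.2).1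
    all_goals rfl

end TopRow

-- The paper's case `n ≥ 1` appears here with `n + 1` in place of `n`.
theorem det_Huckel_bordered_general (F : Type*) [Field F] (n : ℕ) (x y : Fin (n+2) → F) :
    (Huckel F (n+1) x y).det
      = (Matrix.fromBlocks
          (Matrix.of fun (_ : Unit) (_ : Unit) =>
            x (Fin.last (n+1)) + y (Fin.last (n+1)))
          (Matrix.of fun (_ : Unit) (q : TriIdx n) =>
            (-1 : F) ^ (n+1) * x (Fin.last (n+1)) * borderU F n q)
          (Matrix.of fun (p : TriIdx n) (_ : Unit) =>
            y (Fin.last (n+1)) * borderU F n p)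
          (Huckel F n (fun m => x m.castSucc) (fun m => y m.castSucc))).det := by
  let := invertibleOfRightInverse _ _ (pathAdj_mul_pathInv (R := F) (n + 1))
  rw [← det_submatrix_equiv_self (topRowEquiv n), huckel_submatrix_topRowEquiv,
    det_fromBlocks₁₁, show ⅟(pathAdj F (2 * (n + 1))) = pathInv F (n + 1) from rfl,
    topLink_transpose_mul_pathInv_mul_topLink, det_pathAdj_two_mul, det_fromBlocks_sub_border,
    ← mul_assoc, ← mul_pow, neg_one_mul, neg_neg, one_pow, one_mul]

/-- The determinant of the Hückel matrix of the triangle with rows `0, …, n+1` equals the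
determinant of the bordered matrix of size `(n+1)² + 1` obtained by replacing the last row
of atoms by a single bordering row/column. (This is the case `n ≥ 1` of the statement,
with `n` replaced by `n+1`.) -/
theorem det_Huckel_bordered (F : Type*) [Field F] (n : ℕ) (x y : Fin (n+2) → F)
    (h : x (Fin.last (n+1)) + y (Fin.last (n+1)) ≠ 0) :
    (Huckel F (n+1) x y).det
      = (Matrix.fromBlocks
          (Matrix.of fun (_ : Unit) (_ : Unit) =>
            x (Fin.last (n+1)) + y (Fin.last (n+1)))
          (Matrix.of fun (_ : Unit) (q : TriIdx n) =>
            (-1 : F) ^ (n+1) * x (Fin.last (n+1)) * borderU F n q)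
          (Matrix.of fun (p : TriIdx n) (_ : Unit) =>
            y (Fin.last (n+1)) * borderU F n p)
          (Huckel F n (fun m => x m.castSucc) (fun m => y m.castSucc))).det :=
  det_Huckel_bordered_general F n x y
end

section
/- Let R be a commutative ring, 1 ≤ k ≤ n natural numbers, and x, y, t ∈ R. Then det H_{k,n}(t·x, t·y) = t^{n+1−k} · det H_{k,n}(x,y); that is, the determinant of the Hückel matrix of the honeycomb trapezium is a homogeneous polynomial of degree n+1−k in x and y. Moreover det H_{k,n}(x,y) = det H_{k,n}(y,x). -/
open Matrix

/-- Vertices of the honeycomb trapezium with rows `k, …, n`: row `m` has `2m+1` atoms. -/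
abbrev TrapIdx (k n : ℕ) := {p : (m : Fin (n+1)) × Fin (2*m.val+1) // k ≤ p.1.val}

/-- The Hückel matrix of the honeycomb trapezium with rows `k, …, n` and row-dependent
boundary parameters `x m`, `y m`. -/
def HuckelTrap (R : Type*) [CommRing R] (k n : ℕ) (x y : Fin (n+1) → R) :
    Matrix (TrapIdx k n) (TrapIdx k n) R :=
  Matrix.of fun P Q =>
    if P.1.1 = Q.1.1 ∧ (P.1.2.val + 1 = Q.1.2.val ∨ Q.1.2.val + 1 = P.1.2.val) then 1
    else if P.1.1.val + 1 = Q.1.1.val ∧ Even P.1.2.val ∧ Q.1.2.val = P.1.2.val + 1 then 1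
    else if Q.1.1.val + 1 = P.1.1.val ∧ Even Q.1.2.val ∧ P.1.2.val = Q.1.2.val + 1 then 1
    else if P.1.1 = Q.1.1 ∧ P.1.2.val = 0 ∧ Q.1.2.val = 2*P.1.1.val then y P.1.1
    else if P.1.1 = Q.1.1 ∧ P.1.2.val = 2*P.1.1.val ∧ Q.1.2.val = 0 then x P.1.1
    else 0

/-- Transposing swaps the two boundary parameters. -/
lemma HuckelTrap_transpose (R : Type*) [CommRing R] (k n : ℕ) (hk : 1 ≤ k) (x y : R) :
    (HuckelTrap R k n (fun _ => x) (fun _ => y))ᵀ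
      = HuckelTrap R k n (fun _ => y) (fun _ => x) := by
  ext P Q
  have hP := P.2
  have hQ := Q.2
  have hPj := P.1.2.isLt
  have hQj := Q.1.2.isLt
  simp only [transpose_apply, HuckelTrap, of_apply]
  split_ifs <;> first
    | rfl
    | (exfalso; simp only [Fin.ext_iff, Nat.even_iff] at *; omega)

/-- Diagonal scaling identity: scaling rows of even-position atoms by `t` equals scaling the
boundary parameters by `t` and the columns of odd-position atoms by `t`. -/
lemma HuckelTrap_scale (R : Type*) [CommRing R] (k n : ℕ) (x y t : R) :
    (Matrix.diagonal (fun P : TrapIdx k n => if Even P.1.2.val then t else 1))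
        * HuckelTrap R k n (fun _ => x) (fun _ => y)
      = HuckelTrap R k n (fun _ => t*x) (fun _ => t*y)
        * (Matrix.diagonal (fun P : TrapIdx k n => if Even P.1.2.val then 1 else t)) := by
  ext P Q
  rw [Matrix.diagonal_mul, Matrix.mul_diagonal]
  simp only [HuckelTrap, of_apply, Nat.even_iff, Fin.ext_iff]
  split_ifs <;> first
    | ring1
    | omega

lemma prod_trap {R : Type*} [CommRing R] (k n : ℕ) (f : ℕ → ℕ → R) :
    ∏ P : TrapIdx k n, f P.1.1.val P.1.2.val
      = ∏ m ∈ Finset.Ico k (n+1), ∏ j ∈ Finset.range (2*m+1), f m j := by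
  rw [← Finset.prod_subtype
      (Finset.univ.filter fun p : (m : Fin (n+1)) × Fin (2*m.val+1) => k ≤ p.1.val)
      (by simp) (fun p : (m : Fin (n+1)) × Fin (2*m.val+1) => f p.1.val p.2.val)]
  rw [show (Finset.univ.filter fun p : (m : Fin (n+1)) × Fin (2*m.val+1) => k ≤ p.1.val)
      = (Finset.univ.filter fun m : Fin (n+1) => k ≤ m.val).sigma (fun m => Finset.univ) by
    ext ⟨m, j⟩; simp]
  rw [Finset.prod_sigma]
  rw [Finset.prod_filter]
  rw [Fin.prod_univ_eq_prod_range
    (fun m => if k ≤ m then ∏ j : Fin (2*m+1), f m j.val else 1) (n+1)]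
  rw [← Finset.prod_filter]
  rw [show (Finset.range (n+1)).filter (fun m => k ≤ m) = Finset.Ico k (n+1) by
    ext m; simp [Finset.mem_Ico]; omega]
  refine Finset.prod_congr rfl fun m _ => ?_
  exact Fin.prod_univ_eq_prod_range (fun j => f m j) (2*m+1)

lemma row_even {R : Type*} [CommRing R] (t : R) (m : ℕ) :
    ∏ j ∈ Finset.range (2*m+1), (if j % 2 = 0 then t else 1) = t ^ (m+1) := by
  induction m with
  | zero => simp
  | succ m ih =>
      have : 2*(m+1)+1 = (2*m+1) + 1 + 1 := by ring
      rw [this, Finset.prod_range_succ, Finset.prod_range_succ, ih,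
        if_neg (by omega), if_pos (by omega)]
      ring

lemma row_odd {R : Type*} [CommRing R] (t : R) (m : ℕ) :
    ∏ j ∈ Finset.range (2*m+1), (if j % 2 = 0 then 1 else t) = t ^ m := by
  induction m with
  | zero => simp
  | succ m ih =>
      have : 2*(m+1)+1 = (2*m+1) + 1 + 1 := by ring
      rw [this, Finset.prod_range_succ, Finset.prod_range_succ, ih,
        if_neg (by omega), if_pos (by omega)]
      ring

lemma det_diag_even {R : Type*} [CommRing R] (k n : ℕ) (t : R) :
    (Matrix.diagonal (fun P : TrapIdx k n => if Even P.1.2.val then t else 1)).det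
      = t ^ ((∑ m ∈ Finset.Ico k (n+1), m) + (n+1-k)) := by
  rw [Matrix.det_diagonal]
  have h1 : ∏ P : TrapIdx k n, (if Even P.1.2.val then t else 1)
      = ∏ m ∈ Finset.Ico k (n+1), ∏ j ∈ Finset.range (2*m+1),
          (if j % 2 = 0 then t else 1) := by
    refine Eq.trans ?_ (prod_trap k n (fun m j => if j % 2 = 0 then t else 1))
    exact Finset.prod_congr rfl (fun P _ => by simp [Nat.even_iff])
  rw [h1]
  simp only [row_even]
  rw [Finset.prod_pow_eq_pow_sum]
  congr 1
  rw [Finset.sum_add_distrib, Finset.sum_const, Nat.card_Ico, smul_eq_mul, mul_one]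

lemma det_diag_odd {R : Type*} [CommRing R] (k n : ℕ) (t : R) :
    (Matrix.diagonal (fun P : TrapIdx k n => if Even P.1.2.val then 1 else t)).det
      = t ^ (∑ m ∈ Finset.Ico k (n+1), m) := by
  rw [Matrix.det_diagonal]
  have h1 : ∏ P : TrapIdx k n, (if Even P.1.2.val then 1 else t)
      = ∏ m ∈ Finset.Ico k (n+1), ∏ j ∈ Finset.range (2*m+1),
          (if j % 2 = 0 then 1 else t) := by
    refine Eq.trans ?_ (prod_trap k n (fun m j => if j % 2 = 0 then 1 else t))
    exact Finset.prod_congr rfl (fun P _ => by simp [Nat.even_iff])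
  rw [h1]
  simp only [row_odd]
  rw [Finset.prod_pow_eq_pow_sum]

/-- Entrywise mapping by a ring hom. -/
lemma HuckelTrap_map {R S : Type*} [CommRing R] [CommRing S] (f : R →+* S) (k n : ℕ)
    (u v : Fin (n+1) → R) :
    (HuckelTrap R k n u v).map f = HuckelTrap S k n (f ∘ u) (f ∘ v) := by
  ext P Q
  simp only [HuckelTrap, Matrix.map_apply, Matrix.of_apply, Function.comp]
  split_ifs <;> simp

/-- Homogeneity over an integral domain (with cancellation available). -/
lemma det_huckel_homog_domain {R : Type*} [CommRing R] [IsDomain R] (k n : ℕ)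
    (x y t : R) (ht : t ≠ 0) :
    (HuckelTrap R k n (fun _ => t*x) (fun _ => t*y)).det
      = t ^ (n+1-k) * (HuckelTrap R k n (fun _ => x) (fun _ => y)).det := by
  have h := congrArg Matrix.det (HuckelTrap_scale R k n x y t)
  rw [Matrix.det_mul, Matrix.det_mul, det_diag_even, det_diag_odd] at h
  set O := ∑ m ∈ Finset.Ico k (n+1), m
  apply mul_left_cancel₀ (pow_ne_zero O ht)
  rw [mul_comm ((HuckelTrap R k n (fun _ => t*x) (fun _ => t*y)).det) (t ^ O)] at h
  rw [← h, pow_add]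
  ring

theorem det_HuckelTrap_homogeneous_symm (R : Type*) [CommRing R] (k n : ℕ)
    (hk : 1 ≤ k) (hkn : k ≤ n) (x y t : R) :
    (HuckelTrap R k n (fun _ => t*x) (fun _ => t*y)).det
        = t ^ (n+1-k) * (HuckelTrap R k n (fun _ => x) (fun _ => y)).det ∧
    (HuckelTrap R k n (fun _ => x) (fun _ => y)).det
        = (HuckelTrap R k n (fun _ => y) (fun _ => x)).det := by
  constructor
  · -- transfer from the polynomial ring
    have hkey := det_huckel_homog_domain (R := MvPolynomial (Fin 3) ℤ) k n
      (MvPolynomial.X 0) (MvPolynomial.X 1) (MvPolynomial.X 2) (MvPolynomial.X_ne_zero 2)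
    set φ : MvPolynomial (Fin 3) ℤ →+* R
      := (MvPolynomial.aeval (R := ℤ) ![x, y, t] : MvPolynomial (Fin 3) ℤ →ₐ[ℤ] R).toRingHom
      with hφ
    have hφX : φ (MvPolynomial.X 0) = x := by rw [hφ]; simp [MvPolynomial.aeval_X]
    have hφY : φ (MvPolynomial.X 1) = y := by rw [hφ]; simp [MvPolynomial.aeval_X]
    have hφT : φ (MvPolynomial.X 2) = t := by rw [hφ]; simp [MvPolynomial.aeval_X]
    have happ := congrArg φ hkey
    rw [_root_.map_mul, map_pow, hφT, RingHom.map_det, RingHom.map_det,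
      RingHom.mapMatrix_apply, RingHom.mapMatrix_apply,
      HuckelTrap_map, HuckelTrap_map] at happ
    have e1 : (φ ∘ fun _ : Fin (n+1) => MvPolynomial.X 2 * MvPolynomial.X 0)
        = fun _ => t*x := by
      funext m; simp only [Function.comp, _root_.map_mul, hφX, hφT]
    have e2 : (φ ∘ fun _ : Fin (n+1) => MvPolynomial.X 2 * MvPolynomial.X 1)
        = fun _ => t*y := by
      funext m; simp only [Function.comp, _root_.map_mul, hφY, hφT]
    have e3 : (φ ∘ fun _ : Fin (n+1) => (MvPolynomial.X 0 : MvPolynomial (Fin 3) ℤ))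
        = fun _ => x := by funext m; simp only [Function.comp, hφX]
    have e4 : (φ ∘ fun _ : Fin (n+1) => (MvPolynomial.X 1 : MvPolynomial (Fin 3) ℤ))
        = fun _ => y := by funext m; simp only [Function.comp, hφY]
    rw [e1, e2, e3, e4] at happ
    exact happ
  · rw [← Matrix.det_transpose, HuckelTrap_transpose R k n hk]
end
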